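/- arXiv:1703.00282 — 4 statements merged into one kernel-verified Lean document; each statement's English description precedes it below -/
import Mathlib

section
/- Let μ be a positive Borel measure on ℝ with μ(ℝ) = ∞ and μ(I) < ∞ for every bounded interval I, let p ≥ 1, and let h : ℝ → [0,∞) be locally p-integrable with sup_{t∈ℝ} ∫_t^{t+1} h(s)^p ds < ∞. Then lim_{r→∞} (1/μ([-r,r])) ∫_{[-r,r]} (∫_0^1 h(t+s)^p ds)^{1/p} dμ(t) = 0 if and only if lim_{r→∞} (1/μ([-r,r])) ∫_{[-r,r]} ∫_0^1 h(t+s)^p ds dμ(t) = 0. -/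
/-!
Put `F t = ∫_0^1 h(t+s)^p ds`, a continuous function with `0 ≤ F ≤ C`, and `q = 1/p ∈ (0, 1]`.
On every finite measure the averages of `F` and `F^q` control each other: Jensen's inequality
for the concave map `x ↦ x^q` gives `⨍ F^q ≤ (⨍ F)^q`, while `F = F^q F^(1-q) ≤ C^(1-q) F^q`
gives `⨍ F ≤ C^(1-q) ⨍ F^q`. Hence one family of averages tends to `0` iff the other does.
-/

open MeasureTheory Filter Topology

section Average

variable {α : Type*} [MeasurableSpace α] {ν : Measure α} {f : α → ℝ} {q : ℝ}

theorem average_rpow_le_rpow_average [IsFiniteMeasure ν] (hf0 : ∀ x, 0 ≤ f x)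
    (hq0 : 0 ≤ q) (hq1 : q ≤ 1) (hf : Integrable f ν)
    (hfq : Integrable (fun x => f x ^ q) ν) :
    ⨍ x, f x ^ q ∂ν ≤ (⨍ x, f x ∂ν) ^ q := by
  rcases eq_zero_or_neZero ν with rfl | _
  · simp only [average_zero_measure]
    exact Real.rpow_nonneg le_rfl q
  exact (Real.concaveOn_rpow hq0 hq1).le_map_average
    (Real.continuous_rpow_const hq0).continuousOn isClosed_Ici (.of_forall hf0) hf hfq

theorem average_le_mul_average_rpow {C : ℝ} (hf0 : ∀ x, 0 ≤ f x) (hfC : ∀ x, f x ≤ C)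
    (hq1 : q ≤ 1) (hfq : Integrable (fun x => f x ^ q) ν) :
    ⨍ x, f x ∂ν ≤ C ^ (1 - q) * ⨍ x, f x ^ q ∂ν := by
  have hpt : ∀ x, f x ≤ C ^ (1 - q) * f x ^ q := fun x => calc
    f x = f x ^ q * f x ^ (1 - q) := by
      rw [← Real.rpow_add' (hf0 x) (by norm_num), add_sub_cancel, Real.rpow_one]
    _ ≤ f x ^ q * C ^ (1 - q) := mul_le_mul_of_nonneg_left
      (Real.rpow_le_rpow (hf0 x) (hfC x) (by linarith)) (Real.rpow_nonneg (hf0 x) q)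
    _ = C ^ (1 - q) * f x ^ q := mul_comm _ _
  rw [average_eq, average_eq, smul_eq_mul, smul_eq_mul, mul_left_comm (C ^ (1 - q)),
    ← integral_const_mul (C ^ (1 - q))]
  exact mul_le_mul_of_nonneg_left
    (integral_mono_of_nonneg (.of_forall hf0) (hfq.const_mul _) (.of_forall hpt)) (by positivity)

end Average

theorem tendsto_zero_iff_of_le_mul_of_le_rpow {ι : Type*} {l : Filter ι} {a b : ι → ℝ}
    {K q : ℝ} (hq : 0 < q) (ha0 : ∀ i, 0 ≤ a i) (hb0 : ∀ i, 0 ≤ b i)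
    (hab : ∀ i, a i ≤ K * b i) (hba : ∀ i, b i ≤ a i ^ q) :
    Tendsto b l (𝓝 0) ↔ Tendsto a l (𝓝 0) :=
  ⟨fun hb => squeeze_zero ha0 hab (by simpa using hb.const_mul K),
    fun ha => squeeze_zero hb0 hba (ha.rpow_const_nhds_zero hq)⟩

theorem tendsto_average_rpow_iff {α ι : Type*} [MeasurableSpace α] {l : Filter ι}
    (ν : ι → Measure α) [∀ i, IsFiniteMeasure (ν i)] {f : α → ℝ} {C q : ℝ}
    (hf : Measurable f) (hf0 : ∀ x, 0 ≤ f x) (hfC : ∀ x, f x ≤ C) (hq0 : 0 < q) (hq1 : q ≤ 1) :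
    Tendsto (fun i => ⨍ x, f x ^ q ∂ν i) l (𝓝 0) ↔ Tendsto (fun i => ⨍ x, f x ∂ν i) l (𝓝 0) := by
  have hfi : ∀ i, Integrable f (ν i) := fun i =>
    .of_bound hf.aestronglyMeasurable C (.of_forall fun x => by
      rw [Real.norm_of_nonneg (hf0 x)]; exact hfC x)
  have hfqi : ∀ i, Integrable (fun x => f x ^ q) (ν i) := fun i =>
    .of_bound (hf.pow_const q).aestronglyMeasurable (C ^ q) (.of_forall fun x => by
      rw [Real.norm_of_nonneg (Real.rpow_nonneg (hf0 x) q)]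
      exact Real.rpow_le_rpow (hf0 x) (hfC x) hq0.le)
  exact tendsto_zero_iff_of_le_mul_of_le_rpow hq0
    -- an average is an integral against the rescaled measure `(ν i univ)⁻¹ • ν i`
    (fun i => integral_nonneg hf0) (fun i => integral_nonneg fun x => Real.rpow_nonneg (hf0 x) q)
    (fun i => average_le_mul_average_rpow hf0 hfC hq1 (hfqi i))
    (fun i => average_rpow_le_rpow_average hf0 hq0.le hq1 (hfi i) (hfqi i))

theorem continuous_intervalIntegral_comp_add {g : ℝ → ℝ}
    (hg : ∀ a b, IntervalIntegrable g volume a b) (a b : ℝ) :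
    Continuous fun t => ∫ s in a..b, g (t + s) := by
  have hprim := intervalIntegral.continuous_primitive hg 0
  have heq : ∀ t, ∫ s in a..b, g (t + s) =
      (∫ s in (0:ℝ)..(t + b), g s) - ∫ s in (0:ℝ)..(t + a), g s := fun t => by
    rw [intervalIntegral.integral_comp_add_left,
      intervalIntegral.integral_interval_sub_left (hg _ _) (hg _ _)]
  simp only [heq]
  exact (hprim.comp (continuous_add_const b)).sub (hprim.comp (continuous_add_const a))

theorem stmt3_general (μ : Measure ℝ)
    (hμ2 : ∀ a b : ℝ, μ (Set.Icc a b) < ⊤)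
    (p : ℝ) (hp : 1 ≤ p) (h : ℝ → ℝ) (h0 : ∀ t, 0 ≤ h t)
    (hint : ∀ a b : ℝ, IntervalIntegrable (fun t => h t ^ p) volume a b)
    (C : ℝ) (hC : ∀ t : ℝ, (∫ s in t..(t + 1), h s ^ p) ≤ C) :
    Tendsto (fun r : ℝ => (1 / (μ (Set.Icc (-r) r)).toReal) *
        ∫ t in Set.Icc (-r) r, (∫ s in (0:ℝ)..1, h (t + s) ^ p) ^ (1 / p) ∂μ)
      atTop (𝓝 0)
    ↔ Tendsto (fun r : ℝ => (1 / (μ (Set.Icc (-r) r)).toReal) *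
        ∫ t in Set.Icc (-r) r, (∫ s in (0:ℝ)..1, h (t + s) ^ p) ∂μ)
      atTop (𝓝 0) := by
  set F : ℝ → ℝ := fun t => ∫ s in (0:ℝ)..1, h (t + s) ^ p
  have hF0 : ∀ t, 0 ≤ F t := fun t =>
    intervalIntegral.integral_nonneg zero_le_one fun s _ => Real.rpow_nonneg (h0 _) p
  have hFC : ∀ t, F t ≤ C := fun t => by
    simpa [F, intervalIntegral.integral_comp_add_left (fun s => h s ^ p)] using hC t
  have hFcont : Continuous F := continuous_intervalIntegral_comp_add hint 0 1
  have : ∀ r : ℝ, IsFiniteMeasure (μ.restrict (Set.Icc (-r) r)) := fun r =>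
    isFiniteMeasure_restrict.2 (hμ2 _ _).ne
  have havg : ∀ g : ℝ → ℝ, (fun r : ℝ => (1 / (μ (Set.Icc (-r) r)).toReal) *
      ∫ t in Set.Icc (-r) r, g t ∂μ) = fun r => ⨍ t in Set.Icc (-r) r, g t ∂μ := fun g => by
    simp only [setAverage_eq, measureReal_def, one_div, smul_eq_mul]
  rw [havg, havg]
  exact tendsto_average_rpow_iff _ hFcont.measurable hF0 hFC (by positivity)
    ((div_le_one (by linarith)).2 hp)

/-- for a positive Borel measure `μ` on `ℝ` with `μ(ℝ) = ∞` and finite on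
bounded intervals, and an `S^p`-bounded nonnegative locally `p`-integrable `h`, the
`μ`-ergodicity of `t ↦ (∫_0^1 h(t+s)^p ds)^{1/p}` is equivalent to the `μ`-ergodicity of
`t ↦ ∫_0^1 h(t+s)^p ds`. -/
theorem stmt3 (μ : Measure ℝ) (hμ1 : μ Set.univ = ⊤)
    (hμ2 : ∀ a b : ℝ, μ (Set.Icc a b) < ⊤)
    (p : ℝ) (hp : 1 ≤ p) (h : ℝ → ℝ) (hm : Measurable h) (h0 : ∀ t, 0 ≤ h t)
    (hint : ∀ a b : ℝ, IntervalIntegrable (fun t => h t ^ p) volume a b)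
    (C : ℝ) (hC : ∀ t : ℝ, (∫ s in t..(t + 1), h s ^ p) ≤ C) :
    Tendsto (fun r : ℝ => (1 / (μ (Set.Icc (-r) r)).toReal) *
        ∫ t in Set.Icc (-r) r, (∫ s in (0:ℝ)..1, h (t + s) ^ p) ^ (1 / p) ∂μ)
      atTop (𝓝 0)
    ↔ Tendsto (fun r : ℝ => (1 / (μ (Set.Icc (-r) r)).toReal) *
        ∫ t in Set.Icc (-r) r, (∫ s in (0:ℝ)..1, h (t + s) ^ p) ∂μ)
      atTop (𝓝 0) :=
  stmt3_general μ hμ2 p hp h h0 hint C hC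
end

section
/- Let p ≥ 1, δ > 0, and let K : ℝ → [0,∞) be an S^p-almost periodic function. Then the function κ(t) = ∫_{-∞}^t e^{-δ(t-s)} K(s)^p ds is Bohr almost periodic (in particular bounded and continuous on ℝ). -/
/-!
Write `g = K ^ p`, so that `κ = expKernelIntegral δ g`. Stepanov almost periodicity of `K`
bounds the unit-window integrals of `g` uniformly (compare each window with a translate lying in
one fixed window), and, through
`|a ^ p - b ^ p| ≤ ((1 + c) ^ p - 1) (a ^ p + b ^ p) + (1 + c⁻¹) ^ p |a - b| ^ p` with `c` small,
turns `S^p`-almost periods of `K` for small `ε` into `S^1`-almost periods of `g`.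
Integrating against `e^{-δ (t - s)}` over `s ≤ t` maps a function whose unit-window integrals
are at most `B` to one bounded by `B / (1 - e^{-δ})`, because the `n`-th window below `t`
carries weight at most `e^{-δ n}`. Applied to `g` this gives boundedness of `κ`; applied to
`g(· + τ) - g` it makes `S^1`-almost periods of `g` Bohr almost periods of `κ`. Continuity
follows from `κ t = e^{-δ t} ∫_{-∞}^t e^{δ s} g s ds`.
-/

open MeasureTheory Filter Topology

/-- A set `A ⊆ ℝ` is relatively dense. -/
def RelDense (A : Set ℝ) : Prop := ∃ l > 0, ∀ a : ℝ, ∃ τ ∈ A, τ ∈ Set.Icc a (a + l)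

/-- `f` is Stepanov almost periodic of order `p`. -/
def SpAP {E : Type*} [PseudoMetricSpace E] (p : ℝ) (f : ℝ → E) : Prop :=
  ∀ ε > 0, RelDense {τ : ℝ | ∀ x : ℝ,
    (∫ t in x..(x + 1), dist (f (t + τ)) (f t) ^ p) ^ (1 / p) ≤ ε}

open Set Real

lemma add_rpow_le_one_add_rpow_mul_add {a b p c : ℝ} (ha : 0 ≤ a) (hb : 0 ≤ b) (hp : 0 ≤ p)
    (hc : 0 < c) : (a + b) ^ p ≤ (1 + c) ^ p * a ^ p + (1 + c⁻¹) ^ p * b ^ p := by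
  rcases le_total b (c * a) with h | h
  · calc (a + b) ^ p ≤ ((1 + c) * a) ^ p := by gcongr; linarith
      _ = (1 + c) ^ p * a ^ p := mul_rpow (by positivity) ha
      _ ≤ _ := le_add_of_nonneg_right (by positivity)
  · have : a ≤ c⁻¹ * b := by rw [inv_mul_eq_div, le_div_iff₀ hc]; linarith
    calc (a + b) ^ p ≤ ((1 + c⁻¹) * b) ^ p := by gcongr; linarith
      _ = (1 + c⁻¹) ^ p * b ^ p := mul_rpow (by positivity) hb
      _ ≤ _ := le_add_of_nonneg_left (by positivity)

lemma add_rpow_le_two_rpow_mul_add {a b p : ℝ} (ha : 0 ≤ a) (hb : 0 ≤ b) (hp : 0 ≤ p) :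
    (a + b) ^ p ≤ 2 ^ p * (a ^ p + b ^ p) := by
  have := add_rpow_le_one_add_rpow_mul_add ha hb hp one_pos
  norm_num at this
  linarith

lemma abs_rpow_sub_rpow_le {a b p c : ℝ} (ha : 0 ≤ a) (hb : 0 ≤ b) (hp : 0 ≤ p) (hc : 0 < c) :
    |a ^ p - b ^ p| ≤ ((1 + c) ^ p - 1) * (a ^ p + b ^ p) + (1 + c⁻¹) ^ p * |a - b| ^ p := by
  have key : ∀ {x y : ℝ}, 0 ≤ x → 0 ≤ y → x ^ p - y ^ p ≤
      ((1 + c) ^ p - 1) * (x ^ p + y ^ p) + (1 + c⁻¹) ^ p * |x - y| ^ p := by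
    intro x y hx hy
    have h1 : 1 ≤ (1 + c) ^ p := one_le_rpow (by linarith) hp
    have h2 : x ^ p ≤ (y + |x - y|) ^ p := by gcongr; linarith [le_abs_self (x - y)]
    have h3 := add_rpow_le_one_add_rpow_mul_add hy (abs_nonneg (x - y)) hp hc
    nlinarith [rpow_nonneg hx p, rpow_nonneg hy p]
  rw [abs_sub_le_iff]
  exact ⟨key ha hb, by simpa only [add_comm (a ^ p), abs_sub_comm a] using key hb ha⟩

lemma intervalIntegrable_comp_add_right {f : ℝ → ℝ}
    (hf : ∀ a b, IntervalIntegrable f volume a b) (τ a b : ℝ) :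
    IntervalIntegrable (fun t => f (t + τ)) volume a b := by
  simpa using (hf (a + τ) (b + τ)).comp_add_right τ

lemma intervalIntegrable_abs_sub_rpow {p : ℝ} (hp : 0 ≤ p) {f g : ℝ → ℝ} (hf0 : ∀ t, 0 ≤ f t)
    (hg0 : ∀ t, 0 ≤ g t) (hfm : Measurable f) (hgm : Measurable g) {a b : ℝ}
    (hf : IntervalIntegrable (fun t => f t ^ p) volume a b)
    (hg : IntervalIntegrable (fun t => g t ^ p) volume a b) :
    IntervalIntegrable (fun t => |f t - g t| ^ p) volume a b := by
  refine ((hf.add hg).const_mul (2 ^ p)).mono_fun (by fun_prop) (ae_of_all _ fun t => ?_)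
  have hfg : |f t - g t| ≤ f t + g t := by
    rw [abs_sub_le_iff]; constructor <;> linarith [hf0 t, hg0 t]
  dsimp only
  rw [norm_of_nonneg (by positivity), norm_of_nonneg (mul_nonneg (by positivity)
    (add_nonneg (rpow_nonneg (hf0 t) p) (rpow_nonneg (hg0 t) p)))]
  exact (rpow_le_rpow (abs_nonneg _) hfg hp).trans (add_rpow_le_two_rpow_mul_add (hf0 t) (hg0 t) hp)

lemma intervalIntegral_abs_sub_rpow_le_of_stepanov {p ε τ : ℝ} (hp : 0 < p) (hε : 0 ≤ ε)
    {K : ℝ → ℝ} (hτ : ∀ x, (∫ t in x..(x + 1), dist (K (t + τ)) (K t) ^ p) ^ (1 / p) ≤ ε)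
    (x : ℝ) : ∫ t in x..x + 1, |K (t + τ) - K t| ^ p ≤ ε ^ p :=
  (rpow_inv_le_iff_of_pos (intervalIntegral.integral_nonneg (by linarith)
    fun t _ => rpow_nonneg (abs_nonneg (K (t + τ) - K t)) p) hε hp).1
    (by simpa only [one_div, Real.dist_eq] using hτ x)

namespace SpAP

variable {p : ℝ} {K : ℝ → ℝ}

lemma exists_intervalIntegral_rpow_le (hp : 0 < p) (hK0 : ∀ t, 0 ≤ K t) (hKm : Measurable K)
    (hKint : ∀ a b, IntervalIntegrable (fun t => K t ^ p) volume a b) (hK : SpAP p K) :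
    ∃ M, ∀ x, ∫ t in x..x + 1, K t ^ p ≤ M := by
  obtain ⟨l, hl, hS⟩ := hK 1 one_pos
  refine ⟨2 ^ p * ((∫ t in 0..l + 1, K t ^ p) + 1), fun x => ?_⟩
  obtain ⟨τ, hτ, hτx⟩ := hS (-x)
  have hKτ := intervalIntegrable_comp_add_right hKint τ x (x + 1)
  have hdiff : IntervalIntegrable (fun t => |K (t + τ) - K t| ^ p) volume x (x + 1) :=
    intervalIntegrable_abs_sub_rpow hp.le (fun _ => hK0 _) hK0 (by fun_prop) hKm hKτ (hKint _ _)
  have hshift : ∫ t in x..x + 1, K (t + τ) ^ p ≤ ∫ t in 0..l + 1, K t ^ p := by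
    rw [intervalIntegral.integral_comp_add_right (fun t => K t ^ p)]
    exact intervalIntegral.integral_mono_interval (by linarith [hτx.1]) (by linarith)
      (by linarith [hτx.2]) (ae_of_all _ fun t => rpow_nonneg (hK0 t) p) (hKint _ _)
  calc ∫ t in x..x + 1, K t ^ p
      ≤ ∫ t in x..x + 1, 2 ^ p * (K (t + τ) ^ p + |K (t + τ) - K t| ^ p) := by
        refine intervalIntegral.integral_mono_on (by linarith) (hKint _ _)
          ((hKτ.add hdiff).const_mul _) fun t _ => ?_
        refine (rpow_le_rpow (hK0 t) ?_ hp.le).trans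
          (add_rpow_le_two_rpow_mul_add (hK0 _) (abs_nonneg _) hp.le)
        linarith [neg_abs_le (K (t + τ) - K t)]
    _ = 2 ^ p * ((∫ t in x..x + 1, K (t + τ) ^ p) + ∫ t in x..x + 1, |K (t + τ) - K t| ^ p) := by
        rw [intervalIntegral.integral_const_mul, intervalIntegral.integral_add hKτ hdiff]
    _ ≤ 2 ^ p * ((∫ t in 0..l + 1, K t ^ p) + 1) := by
        gcongr
        simpa using intervalIntegral_abs_sub_rpow_le_of_stepanov hp zero_le_one hτ x

lemma relDense_intervalIntegral_abs_rpow_sub_le (hp : 0 < p) (hK0 : ∀ t, 0 ≤ K t)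
    (hKm : Measurable K) (hKint : ∀ a b, IntervalIntegrable (fun t => K t ^ p) volume a b)
    (hK : SpAP p K) {η : ℝ} (hη : 0 < η) :
    RelDense {τ | ∀ x, ∫ t in x..x + 1, |K (t + τ) ^ p - K t ^ p| ≤ η} := by
  obtain ⟨M, hM⟩ := hK.exists_intervalIntegral_rpow_le hp hK0 hKm hKint
  obtain ⟨c, hcM, hc⟩ : ∃ c, ((1 + c) ^ p - 1) * (2 * M) < η / 2 ∧ 0 < c := by
    have : Tendsto (fun c : ℝ => ((1 + c) ^ p - 1) * (2 * M)) (𝓝[>] 0) (𝓝 0) := by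
      have hcont : Continuous fun c : ℝ => ((1 + c) ^ p - 1) * (2 * M) :=
        (((continuous_const.add continuous_id).rpow_const fun _ => Or.inr hp.le).sub
          continuous_const).mul continuous_const
      simpa using hcont.tendsto' 0 _ (by simp) |>.mono_left nhdsWithin_le_nhds
    exact ((this.eventually (gt_mem_nhds (half_pos hη))).and self_mem_nhdsWithin).exists
  have hc1 : 0 ≤ (1 + c) ^ p - 1 := sub_nonneg.2 (one_le_rpow (by linarith) hp.le)
  set C := (1 + c⁻¹) ^ p
  have hC : 0 < C := by positivity
  obtain ⟨l, hl, hS⟩ := hK ((η / (2 * C)) ^ (1 / p)) (by positivity)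
  refine ⟨l, hl, fun a => ?_⟩
  obtain ⟨τ, hτ, hτa⟩ := hS a
  refine ⟨τ, fun x => ?_, hτa⟩
  have hKτ := intervalIntegrable_comp_add_right hKint τ x (x + 1)
  have hdiff : IntervalIntegrable (fun t => |K (t + τ) - K t| ^ p) volume x (x + 1) :=
    intervalIntegrable_abs_sub_rpow hp.le (fun _ => hK0 _) hK0 (by fun_prop) hKm hKτ (hKint _ _)
  have hMτ : ∫ t in x..x + 1, K (t + τ) ^ p ≤ M := by
    rw [intervalIntegral.integral_comp_add_right (fun t => K t ^ p), add_right_comm]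
    exact hM _
  have hε : ((η / (2 * C)) ^ (1 / p)) ^ p = η / (2 * C) := by
    rw [← rpow_mul (by positivity), one_div_mul_cancel hp.ne', rpow_one]
  calc ∫ t in x..x + 1, |K (t + τ) ^ p - K t ^ p|
      ≤ ∫ t in x..x + 1, (((1 + c) ^ p - 1) * (K (t + τ) ^ p + K t ^ p)
          + C * |K (t + τ) - K t| ^ p) := by
        refine intervalIntegral.integral_mono_on (by linarith) (hKτ.sub (hKint _ _)).abs
          (((hKτ.add (hKint _ _)).const_mul _).add (hdiff.const_mul _)) fun t _ => ?_
        exact abs_rpow_sub_rpow_le (hK0 _) (hK0 _) hp.le hc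
    _ = ((1 + c) ^ p - 1) * ((∫ t in x..x + 1, K (t + τ) ^ p) + ∫ t in x..x + 1, K t ^ p)
          + C * ∫ t in x..x + 1, |K (t + τ) - K t| ^ p := by
        rw [intervalIntegral.integral_add ((hKτ.add (hKint _ _)).const_mul _) (hdiff.const_mul _),
          intervalIntegral.integral_const_mul, intervalIntegral.integral_const_mul,
          intervalIntegral.integral_add hKτ (hKint _ _)]
    _ ≤ ((1 + c) ^ p - 1) * (2 * M) + C * (η / (2 * C)) := by
        gcongr
        · linarith [hM x]
        · rw [← hε]
          exact intervalIntegral_abs_sub_rpow_le_of_stepanov hp (by positivity) hτ x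
    _ ≤ η := by
        have : C * (η / (2 * C)) = η / 2 := by field_simp
        linarith

end SpAP

noncomputable def expKernelIntegral (δ : ℝ) (g : ℝ → ℝ) (t : ℝ) : ℝ :=
  ∫ s in Iic t, exp (-δ * (t - s)) * g s

section ExpKernel

variable {δ : ℝ} {f g : ℝ → ℝ}

lemma one_sub_exp_neg_pos (hδ : 0 < δ) : 0 < 1 - exp (-δ) :=
  sub_pos.2 (exp_lt_one_iff.2 (neg_neg_of_pos hδ))

lemma lintegral_Ioc_enorm_le_of_intervalIntegral {x B : ℝ}
    (hf : IntervalIntegrable f volume x (x + 1)) (hB : ∫ s in x..x + 1, |f s| ≤ B) :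
    ∫⁻ s in Ioc x (x + 1), ‖f s‖ₑ ≤ ENNReal.ofReal B := by
  rw [← ofReal_integral_norm_eq_lintegral_enorm hf.1,
    ← intervalIntegral.integral_of_le (by linarith)]
  exact ENNReal.ofReal_le_ofReal hB

lemma lintegral_Iic_exp_mul_le (hδ : 0 < δ) {B : ℝ} (hf : ∀ a b, IntervalIntegrable f volume a b)
    (hB : ∀ x, ∫ s in x..x + 1, |f s| ≤ B) (t : ℝ) :
    ∫⁻ s in Iic t, ‖exp (-δ * (t - s)) * f s‖ₑ ≤ ENNReal.ofReal (B / (1 - exp (-δ))) := by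
  set r := ENNReal.ofReal (exp (-δ))
  have hpiece : ∀ n : ℕ, ∫⁻ s in Ioc (t - (n + 1)) (t - n), ‖exp (-δ * (t - s)) * f s‖ₑ
      ≤ r ^ n * ENNReal.ofReal B := by
    intro n
    calc ∫⁻ s in Ioc (t - (n + 1)) (t - n), ‖exp (-δ * (t - s)) * f s‖ₑ
        ≤ ∫⁻ s in Ioc (t - (n + 1)) (t - (n + 1) + 1), r ^ n * ‖f s‖ₑ := by
          rw [show t - (n + 1 : ℝ) + 1 = t - n by ring]
          refine setLIntegral_mono' measurableSet_Ioc fun s hs => ?_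
          rw [enorm_mul, Real.enorm_of_nonneg (exp_nonneg _), ← ENNReal.ofReal_pow (exp_nonneg _),
            ← exp_nat_mul]
          gcongr ENNReal.ofReal (exp ?_) * _
          nlinarith [hs.2]
      _ ≤ r ^ n * ENNReal.ofReal B := by
          rw [lintegral_const_mul' _ _ (by finiteness)]
          gcongr
          exact lintegral_Ioc_enorm_le_of_intervalIntegral (hf _ _) (hB _)
  have hcover : Iic t ⊆ ⋃ n : ℕ, Ioc (t - (n + 1)) (t - n) := fun s (hs : s ≤ t) =>
    mem_iUnion.2 ⟨⌊t - s⌋₊, by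
      constructor <;> linarith [Nat.floor_le (sub_nonneg.2 hs), Nat.lt_floor_add_one (t - s)]⟩
  have hr := one_sub_exp_neg_pos hδ
  calc ∫⁻ s in Iic t, ‖exp (-δ * (t - s)) * f s‖ₑ
      ≤ ∑' n : ℕ, ∫⁻ s in Ioc (t - (n + 1)) (t - n), ‖exp (-δ * (t - s)) * f s‖ₑ :=
        (lintegral_mono_set hcover).trans (lintegral_iUnion_le _ _)
    _ ≤ ∑' n : ℕ, r ^ n * ENNReal.ofReal B := ENNReal.tsum_le_tsum hpiece
    _ = ENNReal.ofReal (B / (1 - exp (-δ))) := by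
        rw [ENNReal.tsum_mul_right, ENNReal.tsum_geometric, ← ENNReal.ofReal_one,
          ← ENNReal.ofReal_sub _ (exp_nonneg _), ← ENNReal.ofReal_inv_of_pos hr,
          ← ENNReal.ofReal_mul (inv_nonneg.2 hr.le), inv_mul_eq_div]

lemma integrableOn_Iic_exp_mul (hδ : 0 < δ) {B : ℝ} (hfm : Measurable f)
    (hf : ∀ a b, IntervalIntegrable f volume a b) (hB : ∀ x, ∫ s in x..x + 1, |f s| ≤ B)
    (t : ℝ) : IntegrableOn (fun s => exp (-δ * (t - s)) * f s) (Iic t) :=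
  ⟨(by fun_prop : Measurable fun s => exp (-δ * (t - s)) * f s).aestronglyMeasurable,
    (lintegral_Iic_exp_mul_le hδ hf hB t).trans_lt ENNReal.ofReal_lt_top⟩

lemma abs_expKernelIntegral_le (hδ : 0 < δ) {B : ℝ} (hf : ∀ a b, IntervalIntegrable f volume a b)
    (hB : ∀ x, ∫ s in x..x + 1, |f s| ≤ B) (t : ℝ) :
    |expKernelIntegral δ f t| ≤ B / (1 - exp (-δ)) := by
  have hB0 : 0 ≤ B :=
    (intervalIntegral.integral_nonneg (by linarith) fun s _ => abs_nonneg (f s)).trans (hB 0)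
  have hr := one_sub_exp_neg_pos hδ
  rw [← norm_eq_abs, ← ENNReal.ofReal_le_ofReal_iff (by positivity), ofReal_norm]
  exact (enorm_integral_le_lintegral_enorm _).trans (lintegral_Iic_exp_mul_le hδ hf hB t)

lemma expKernelIntegral_add (δ : ℝ) (g : ℝ → ℝ) (t τ : ℝ) :
    expKernelIntegral δ g (t + τ) = expKernelIntegral δ (fun s => g (s + τ)) t := by
  rw [expKernelIntegral, ← (measurePreserving_add_right volume τ).setIntegral_preimage_emb
    (measurableEmbedding_addRight τ), preimage_add_const_Iic, add_sub_cancel_right,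
    expKernelIntegral]
  simp only [add_sub_add_right_eq_sub]

lemma expKernelIntegral_sub {t : ℝ} (hf : IntegrableOn (fun s => exp (-δ * (t - s)) * f s) (Iic t))
    (hg : IntegrableOn (fun s => exp (-δ * (t - s)) * g s) (Iic t)) :
    expKernelIntegral δ f t - expKernelIntegral δ g t = expKernelIntegral δ (f - g) t := by
  rw [expKernelIntegral, expKernelIntegral, expKernelIntegral, ← integral_sub hf hg]
  simp only [Pi.sub_apply, mul_sub]

lemma continuous_expKernelIntegral (hg : ∀ a b, IntervalIntegrable g volume a b)
    (hint : ∀ t, IntegrableOn (fun s => exp (-δ * (t - s)) * g s) (Iic t)) :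
    Continuous (expKernelIntegral δ g) := by
  have hfactor : ∀ t s, exp (-δ * (t - s)) * g s = exp (-δ * t) * (exp (δ * s) * g s) := by
    intro t s
    rw [← mul_assoc, ← exp_add]
    ring_nf
  have hIic : ∀ t, IntegrableOn (fun s => exp (δ * s) * g s) (Iic t) := fun t =>
    IntegrableOn.congr_fun ((hint t).const_mul (exp (δ * t))) (fun s _ => by
      rw [hfactor, ← mul_assoc, ← exp_add]; ring_nf; simp) measurableSet_Iic
  have hprimitive : ∀ t, expKernelIntegral δ g t = exp (-δ * t) *
      ((∫ s in Iic 0, exp (δ * s) * g s) + ∫ s in (0 : ℝ)..t, exp (δ * s) * g s) := by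
    intro t
    rw [intervalIntegral.integral_Iic_sub_Iic (hIic 0) (hIic t) |>.symm, add_sub_cancel,
      expKernelIntegral, ← integral_const_mul]
    simp only [hfactor]
  have hexp : ∀ a b, IntervalIntegrable (fun s => exp (δ * s) * g s) volume a b := fun a b =>
    (hg a b).continuousOn_mul (by fun_prop)
  rw [show expKernelIntegral δ g = _ from funext hprimitive]
  exact (continuous_exp.comp (by fun_prop)).mul
    (continuous_const.add (intervalIntegral.continuous_primitive hexp 0))

lemma abs_expKernelIntegral_add_sub_le (hδ : 0 < δ) (hgm : Measurable g)
    (hg : ∀ a b, IntervalIntegrable g volume a b) {M : ℝ} (hM : ∀ x, ∫ s in x..x + 1, |g s| ≤ M)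
    {τ η : ℝ} (hτ : ∀ x, ∫ s in x..x + 1, |g (s + τ) - g s| ≤ η) (t : ℝ) :
    |expKernelIntegral δ g (t + τ) - expKernelIntegral δ g t| ≤ η / (1 - exp (-δ)) := by
  have hgτ := intervalIntegrable_comp_add_right hg τ
  have hMτ : ∀ x, ∫ s in x..x + 1, |g (s + τ)| ≤ M := fun x => by
    rw [intervalIntegral.integral_comp_add_right (fun s => |g s|), add_right_comm]
    exact hM _
  rw [expKernelIntegral_add, expKernelIntegral_sub
    (integrableOn_Iic_exp_mul hδ (by fun_prop) hgτ hMτ t) (integrableOn_Iic_exp_mul hδ hgm hg hM t)]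
  exact abs_expKernelIntegral_le hδ (fun a b => (hgτ a b).sub (hg a b)) hτ t

end ExpKernel

/-- if `K : ℝ → [0,∞)` is `S^p`-almost periodic and `δ > 0`, then
`κ(t) = ∫_{-∞}^t e^{-δ(t-s)} K(s)^p ds` is Bohr almost periodic: it is continuous, bounded,
and for every `ε > 0` the set of `τ` with `sup_t |κ(t+τ) - κ(t)| < ε` is relatively dense. -/
theorem stmt8 (p δ : ℝ) (hp : 1 ≤ p) (hδ : 0 < δ)
    (K : ℝ → ℝ) (hK0 : ∀ t, 0 ≤ K t) (hKm : Measurable K)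
    (hKint : ∀ a b : ℝ, IntervalIntegrable (fun t => K t ^ p) volume a b)
    (hKap : SpAP p K) :
    Continuous (fun t : ℝ => ∫ s in Set.Iic t, Real.exp (-δ * (t - s)) * K s ^ p) ∧
    (∃ C : ℝ, ∀ t : ℝ, |∫ s in Set.Iic t, Real.exp (-δ * (t - s)) * K s ^ p| ≤ C) ∧
    (∀ ε > 0, RelDense {τ : ℝ | ∃ c, c < ε ∧ ∀ t : ℝ,
      |(∫ s in Set.Iic (t + τ), Real.exp (-δ * (t + τ - s)) * K s ^ p) -
        ∫ s in Set.Iic t, Real.exp (-δ * (t - s)) * K s ^ p| ≤ c}) := by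
  have hp0 : 0 < p := by linarith
  obtain ⟨M, hM⟩ := hKap.exists_intervalIntegral_rpow_le hp0 hK0 hKm hKint
  have habs : (fun s => |K s ^ p|) = fun s => K s ^ p :=
    funext fun s => abs_of_nonneg (rpow_nonneg (hK0 s) p)
  have hM' : ∀ x, ∫ s in x..x + 1, |K s ^ p| ≤ M := by simpa only [habs] using hM
  have hr := one_sub_exp_neg_pos hδ
  refine ⟨continuous_expKernelIntegral hKint (integrableOn_Iic_exp_mul hδ (by fun_prop) hKint hM'),
    ⟨_, abs_expKernelIntegral_le hδ hKint hM'⟩, fun ε hε => ?_⟩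
  obtain ⟨l, hl, hS⟩ := hKap.relDense_intervalIntegral_abs_rpow_sub_le hp0 hK0 hKm hKint
    (η := ε / 2 * (1 - exp (-δ))) (by positivity)
  refine ⟨l, hl, fun a => ?_⟩
  obtain ⟨τ, hτ, hτa⟩ := hS a
  refine ⟨τ, ⟨ε / 2, by linarith, fun t => ?_⟩, hτa⟩
  have := abs_expKernelIntegral_add_sub_le hδ (by fun_prop) hKint hM' hτ t
  rwa [mul_div_cancel_right₀ _ hr.ne'] at this
end

section
/- Let μ be a positive Borel measure on ℝ with μ(ℝ) = ∞ and μ(I) < ∞ for every bounded interval I, satisfying condition (H). Let 𝕏 be a Banach space, L ≥ 0, and let F, F₁ : ℝ × 𝕏 → 𝕏 be such that for every x ∈ 𝕏: F₁(·,x) is Bohr almost periodic, F(·,x) is bounded and continuous, and the function t ↦ ‖F(t,x) - F₁(t,x)‖ is μ-ergodic. If ‖F(t,x) - F(t,y)‖ ≤ L‖x-y‖ for all t ∈ ℝ and x, y ∈ 𝕏, then also ‖F₁(t,x) - F₁(t,y)‖ ≤ L‖x-y‖ for all t ∈ ℝ and x, y ∈ 𝕏. -/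
open MeasureTheory Filter Topology

/-- Condition (H) on the measure `μ`. -/
def CondH (μ : Measure ℝ) : Prop :=
  ∀ τ : ℝ, ∃ β > (0:ℝ), ∃ a b : ℝ, ∀ A : Set ℝ, MeasurableSet A → A ∩ Set.Icc a b = ∅ →
    μ ((fun t => t + τ) '' A) ≤ ENNReal.ofReal β * μ A

/-- `φ : ℝ → ℝ` is `μ`-ergodic. -/
def MuErgodic (μ : Measure ℝ) (φ : ℝ → ℝ) : Prop :=
  Tendsto (fun r : ℝ => (1 / (μ (Set.Icc (-r) r)).toReal) *
      ∫ t in Set.Icc (-r) r, φ t ∂μ) atTop (𝓝 0)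

/-!
Suppose `‖F₁ t₀ x - F₁ t₀ y‖ = L * ‖x - y‖ + K` with `K > 0`. The difference
`D = F₁(·, x) - F₁(·, y)` is again almost periodic (a common finite net of translates of the two
functions gives common almost periods) and uniformly continuous, so `‖D‖ ≥ L * ‖x - y‖ + K / 2`
on a relatively dense family of intervals of a fixed length `δ`. There the Lipschitz bound
for `F` forces `φ = ‖F(·, x) - F₁(·, x)‖ + ‖F(·, y) - F₁(·, y)‖ ≥ K / 2`. Applying (H) to the
finitely many shifts by multiples of `δ` of size at most the density length, these intervals
carry a fixed proportion of `μ [-r, r]` for large `r`, so the mean of `φ` stays away from `0`,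
contradicting the `μ`-ergodicity of the two summands.
-/

open Set

theorem RelDense.mono {A B : Set ℝ} (hA : RelDense A) (hAB : A ⊆ B) : RelDense B :=
  let ⟨l, hl, h⟩ := hA
  ⟨l, hl, fun a => let ⟨τ, hτA, hτ⟩ := h a; ⟨τ, hAB hτA, hτ⟩⟩

section AlmostPeriodic

variable {E : Type*} [SeminormedAddCommGroup E] {u v : ℝ → E}

def IsAlmostPeriodic (u : ℝ → E) : Prop :=
  ∀ ε > 0, RelDense {τ | ∀ t, ‖u (t + τ) - u t‖ ≤ ε}

def IsTranslateNet (u : ℝ → E) (ε : ℝ) (S : Set ℝ) : Prop :=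
  ∀ s, ∃ σ ∈ S, ∀ t, ‖u (t + s) - u (t + σ)‖ ≤ ε

theorem IsAlmostPeriodic.uniformContinuous (hu : IsAlmostPeriodic u) (hc : Continuous u) :
    UniformContinuous u := by
  rw [Metric.uniformContinuous_iff]
  intro ε hε
  obtain ⟨l, -, hl⟩ := hu (ε / 3) (by positivity)
  have hK :=
    (isCompact_Icc (a := -1) (b := l + 1)).uniformContinuousOn_of_continuous hc.continuousOn
  obtain ⟨δ, hδ, hδK⟩ := Metric.uniformContinuousOn_iff.1 hK (ε / 3) (by positivity)
  refine ⟨min δ 1, by positivity, fun s s' hss' => ?_⟩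
  obtain ⟨τ, hτ, hτl⟩ := hl (-s)
  have hss'1 := abs_lt.1 ((Real.dist_eq s s' ▸ hss').trans_le (min_le_right δ 1))
  have hclose : dist (u (s + τ)) (u (s' + τ)) < ε / 3 :=
    hδK _ ⟨by linarith [hτl.1], by linarith [hτl.2]⟩ _
      ⟨by linarith [hτl.1, hss'1.2], by linarith [hτl.2, hss'1.1]⟩
      (by rw [dist_add_right]; exact hss'.trans_le (min_le_left δ 1))
  calc dist (u s) (u s')
      ≤ dist (u s) (u (s + τ)) + dist (u (s + τ)) (u (s' + τ)) + dist (u (s' + τ)) (u s') :=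
        dist_triangle4 _ _ _ _
    _ < ε / 3 + ε / 3 + ε / 3 := by
        refine add_lt_add_of_lt_of_le (add_lt_add_of_le_of_lt ?_ hclose) ?_
        · rw [dist_comm, dist_eq_norm]; exact hτ s
        · rw [dist_eq_norm]; exact hτ s'
    _ = ε := by ring

theorem IsAlmostPeriodic.exists_finite_isTranslateNet (hu : IsAlmostPeriodic u)
    (hc : Continuous u) {ε : ℝ} (hε : 0 < ε) : ∃ S : Set ℝ, S.Finite ∧ IsTranslateNet u ε S := by
  obtain ⟨δ, hδ, hδu⟩ := Metric.uniformContinuous_iff.1 (hu.uniformContinuous hc) (ε / 2)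
    (by positivity)
  obtain ⟨l, -, hl⟩ := hu (ε / 2) (by positivity)
  obtain ⟨S, -, hSfin, hS⟩ :=
    Metric.finite_approx_of_totallyBounded (isCompact_Icc (a := 0) (b := l)).totallyBounded δ hδ
  refine ⟨S, hSfin, fun s => ?_⟩
  obtain ⟨τ, hτ, hτl⟩ := hl (-s)
  obtain ⟨σ, hσS, hσ⟩ := mem_iUnion₂.1 (hS ⟨by linarith [hτl.1], by linarith [hτl.2]⟩ :
    s + τ ∈ ⋃ y ∈ S, Metric.ball y δ)
  refine ⟨σ, hσS, fun t => ?_⟩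
  have hclose : dist (u (t + (s + τ))) (u (t + σ)) < ε / 2 :=
    hδu (by rwa [dist_add_left])
  calc ‖u (t + s) - u (t + σ)‖
      ≤ dist (u (t + s)) (u (t + s + τ)) + dist (u (t + (s + τ))) (u (t + σ)) := by
        rw [← dist_eq_norm, add_assoc]; exact dist_triangle _ _ _
    _ ≤ ε / 2 + ε / 2 := by
        gcongr
        rw [dist_comm, dist_eq_norm]; exact hτ _
    _ = ε := by ring

theorem IsTranslateNet.relDense {ε : ℝ} {S : Set ℝ} (hS : S.Finite) (hu : IsTranslateNet u ε S) :
    RelDense {τ | ∀ t, ‖u (t + τ) - u t‖ ≤ ε} := by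
  obtain ⟨M, hM⟩ := hS.isBounded.subset_closedBall 0
  refine ⟨2 * |M| + 1, by positivity, fun a => ?_⟩
  obtain ⟨σ, hσS, hσ⟩ := hu (a + |M|)
  have hσM : |σ| ≤ |M| := by
    have := hM hσS
    rw [mem_closedBall_zero_iff, Real.norm_eq_abs] at this
    exact this.trans (le_abs_self M)
  rw [abs_le] at hσM
  refine ⟨a + |M| - σ, fun t => ?_, by linarith, by linarith⟩
  have h := hσ (t - σ)
  rwa [sub_add_cancel, show t - σ + (a + |M|) = t + (a + |M| - σ) by ring] at h

theorem exists_finite_isTranslateNet_sub {ε : ℝ} {Su Sv : Set ℝ} (hSu : Su.Finite)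
    (hSv : Sv.Finite) (hu : IsTranslateNet u ε Su) (hv : IsTranslateNet v ε Sv) :
    ∃ S : Set ℝ, S.Finite ∧ IsTranslateNet (u - v) (4 * ε) S := by
  choose σu hσuS hσu using hu
  choose σv hσvS hσv using hv
  -- one representative for each pair of net points that occurs
  let p : ℝ → ℝ × ℝ := fun s => (σu s, σv s)
  refine ⟨Function.invFun p '' range p, ((hSu.prod hSv).subset ?_).image _, fun s => ?_⟩
  · rintro _ ⟨s, rfl⟩; exact ⟨hσuS s, hσvS s⟩
  set σ := Function.invFun p (p s)
  have hσ : p σ = p s := Function.invFun_eq ⟨s, rfl⟩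
  refine ⟨σ, mem_image_of_mem _ (mem_range_self s), fun t => ?_⟩
  have hsame : ∀ (w : ℝ → E) (σw : ℝ → ℝ), (∀ s t, ‖w (t + s) - w (t + σw s)‖ ≤ ε) →
      σw σ = σw s → ‖w (t + s) - w (t + σ)‖ ≤ 2 * ε := fun w σw hw heq =>
    calc ‖w (t + s) - w (t + σ)‖ ≤ ‖w (t + s) - w (t + σw s)‖ + ‖w (t + σw s) - w (t + σ)‖ :=
          norm_sub_le_norm_sub_add_norm_sub _ _ _
      _ ≤ ε + ε := add_le_add (hw s t) (by rw [norm_sub_rev, ← heq]; exact hw σ t)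
      _ = 2 * ε := by ring
  calc ‖(u - v) (t + s) - (u - v) (t + σ)‖
      = ‖(u (t + s) - u (t + σ)) - (v (t + s) - v (t + σ))‖ := by
        rw [Pi.sub_apply, Pi.sub_apply, sub_sub_sub_comm]
    _ ≤ 2 * ε + 2 * ε := (norm_sub_le _ _).trans (add_le_add
        (hsame u σu hσu (congrArg Prod.fst hσ)) (hsame v σv hσv (congrArg Prod.snd hσ)))
    _ = 4 * ε := by ring

theorem IsAlmostPeriodic.sub (hu : IsAlmostPeriodic u) (hv : IsAlmostPeriodic v)
    (huc : Continuous u) (hvc : Continuous v) : IsAlmostPeriodic (u - v) := by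
  intro ε hε
  obtain ⟨Su, hSu, hnu⟩ := hu.exists_finite_isTranslateNet huc (ε := ε / 4) (by positivity)
  obtain ⟨Sv, hSv, hnv⟩ := hv.exists_finite_isTranslateNet hvc (ε := ε / 4) (by positivity)
  obtain ⟨S, hS, hn⟩ := exists_finite_isTranslateNet_sub hSu hSv hnu hnv
  rw [mul_div_cancel₀ _ four_ne_zero] at hn
  exact hn.relDense hS

theorem IsAlmostPeriodic.relDense_Icc_norm_sub_le (hu : IsAlmostPeriodic u) (hc : Continuous u)
    (t₀ : ℝ) {ε : ℝ} (hε : 0 < ε) :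
    ∃ δ > 0, RelDense {d | ∀ s ∈ Icc d (d + δ), ‖u s - u t₀‖ ≤ ε} := by
  obtain ⟨δ, hδ, hδu⟩ := Metric.uniformContinuous_iff.1 (hu.uniformContinuous hc) (ε / 2)
    (by positivity)
  obtain ⟨l, hl, hT⟩ := hu (ε / 2) (by positivity)
  refine ⟨δ / 2, by positivity, l, hl, fun a => ?_⟩
  obtain ⟨τ, hτ, hτl⟩ := hT (a - t₀)
  refine ⟨t₀ + τ, fun s hs => ?_, by linarith [hτl.1], by linarith [hτl.2]⟩
  have hclose : dist (u s) (u (t₀ + τ)) < ε / 2 := by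
    refine hδu ?_
    rw [Real.dist_eq, abs_lt]; constructor <;> linarith [hs.1, hs.2]
  calc ‖u s - u t₀‖ ≤ dist (u s) (u (t₀ + τ)) + ‖u (t₀ + τ) - u t₀‖ := by
        rw [← dist_eq_norm, ← dist_eq_norm]; exact dist_triangle _ _ _
    _ ≤ ε / 2 + ε / 2 := add_le_add hclose.le (hτ t₀)
    _ = ε := by ring

end AlmostPeriodic

section ErgodicMeasure

theorem exists_int_sub_mul_mem_of_forall_exists_Icc_subset {A : Set ℝ} {ℓ δ r t : ℝ} {N : ℕ}
    (hδ : 0 < δ) (hA : ∀ a, ∃ d ∈ Icc a (a + ℓ), Icc d (d + δ) ⊆ A) (hN : ℓ + δ ≤ N * δ)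
    (hr : ℓ + δ ≤ r) (ht : t ∈ Icc (-r) r) :
    ∃ j ∈ Finset.Icc (-N : ℤ) N, t - j * δ ∈ A ∩ Icc (-r) r ∧ |t| - (ℓ + δ) ≤ |t - j * δ| := by
  -- an interval in `A` between `t` and `0`, at distance at most `ℓ + δ` from `t`
  obtain ⟨d, hdA, hd₁, hd₂, hds⟩ : ∃ d, Icc d (d + δ) ⊆ A ∩ Icc (-r) r ∧ -ℓ ≤ t - d ∧
      t - d ≤ ℓ + δ ∧ ∀ s ∈ Icc d (d + δ), |t| - (ℓ + δ) ≤ |s| := by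
    rcases le_or_gt 0 t with h0 | h0
    · obtain ⟨d, hd, hdA⟩ := hA (t - (ℓ + δ))
      refine ⟨d, fun s hs => ⟨hdA hs, by linarith [hs.1, hd.1], by linarith [hs.2, hd.2, ht.2]⟩,
        by linarith [hd.1, hd.2], by linarith [hd.1, hd.2], fun s hs => ?_⟩
      linarith [hs.1, hd.1, abs_of_nonneg h0, le_abs_self s]
    · obtain ⟨d, hd, hdA⟩ := hA t
      refine ⟨d, fun s hs => ⟨hdA hs, by linarith [hs.1, hd.1, ht.1], by linarith [hs.2, hd.2]⟩,
        by linarith [hd.1, hd.2], by linarith [hd.1, hd.2], fun s hs => ?_⟩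
      linarith [hs.2, hd.2, abs_of_neg h0, neg_abs_le s]
  obtain ⟨j, hj, -⟩ := existsUnique_sub_zsmul_mem_Ico hδ t d
  rw [zsmul_eq_mul] at hj
  have hjN : (j : ℝ) * δ ≤ N * δ := by linarith [hj.1]
  have hjN' : (-(N : ℝ) - 1) * δ < j * δ := by linarith [hj.2]
  have h₁ : (j : ℝ) ≤ N := le_of_mul_le_mul_right hjN hδ
  have h₂ : -(N : ℝ) - 1 < j := lt_of_mul_lt_mul_right hjN' hδ.le
  refine ⟨j, Finset.mem_Icc.2 ⟨?_, by exact_mod_cast h₁⟩, hdA (Ico_subset_Icc_self hj),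
    hds _ (Ico_subset_Icc_self hj)⟩
  have : -(N : ℤ) - 1 < j := by exact_mod_cast h₂
  omega

variable {μ : Measure ℝ}

theorem CondH.exists_uniform (hH : CondH μ) (S : Finset ℝ) :
    ∃ β > (0 : ℝ), ∃ M : ℝ, ∀ τ ∈ S, ∀ A : Set ℝ, MeasurableSet A → A ∩ Icc (-M) M = ∅ →
      μ ((fun t => t + τ) '' A) ≤ ENNReal.ofReal β * μ A := by
  choose β hβ a b h using hH
  have hβS : 0 ≤ ∑ τ ∈ S, β τ := Finset.sum_nonneg fun τ _ => (hβ τ).le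
  refine ⟨1 + ∑ τ ∈ S, β τ, by positivity, ∑ τ ∈ S, (|a τ| + |b τ|),
    fun τ hτ A hA hAM => ?_⟩
  have hab : A ∩ Icc (a τ) (b τ) = ∅ := by
    have hM := Finset.single_le_sum (f := fun τ => |a τ| + |b τ|) (fun τ _ => by positivity) hτ
    refine subset_empty_iff.1 (hAM ▸ inter_subset_inter_right A fun z hz => ⟨?_, ?_⟩)
    · linarith [neg_abs_le (a τ), abs_nonneg (b τ), hz.1]
    · linarith [le_abs_self (b τ), abs_nonneg (a τ), hz.2]
  calc μ ((fun t => t + τ) '' A) ≤ ENNReal.ofReal (β τ) * μ A := h τ A hA hab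
    _ ≤ ENNReal.ofReal (1 + ∑ τ ∈ S, β τ) * μ A := by
      gcongr
      linarith [Finset.single_le_sum (fun τ _ => (hβ τ).le) hτ]

theorem CondH.exists_measure_Icc_le (hH : CondH μ) {A : Set ℝ} (hAm : MeasurableSet A)
    {ℓ δ : ℝ} (hδ : 0 < δ) (hA : ∀ a, ∃ d ∈ Icc a (a + ℓ), Icc d (d + δ) ⊆ A) :
    ∃ B > (0 : ℝ), ∃ R : ℝ, ∀ r, ℓ + δ ≤ r →
      μ (Icc (-r) r) ≤ μ (Icc (-R) R) + ENNReal.ofReal B * μ (A ∩ Icc (-r) r) := by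
  obtain ⟨N, hN⟩ := exists_nat_ge ((ℓ + δ) / δ)
  rw [div_le_iff₀ hδ] at hN
  set S := (Finset.Icc (-N : ℤ) N).image fun j : ℤ => (j : ℝ) * δ
  have hS : 0 < S.card := Finset.card_pos.2 ⟨0, Finset.mem_image.2 ⟨0, by simp, by simp⟩⟩
  obtain ⟨β, hβ, M, hM⟩ := hH.exists_uniform S
  refine ⟨S.card * β, by positivity, M + (ℓ + δ), fun r hr => ?_⟩
  set G := A ∩ Icc (-r) r ∩ {s | M < |s|}
  have hcover : Icc (-r) r ⊆
      Icc (-(M + (ℓ + δ))) (M + (ℓ + δ)) ∪ ⋃ τ ∈ S, (fun t => t + τ) '' G := by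
    intro t ht
    by_cases htR : |t| ≤ M + (ℓ + δ)
    · exact Or.inl (abs_le.1 htR)
    obtain ⟨j, hj, hmem, habs⟩ := exists_int_sub_mul_mem_of_forall_exists_Icc_subset hδ hA hN hr ht
    refine Or.inr (mem_iUnion₂.2 ⟨j * δ, Finset.mem_image_of_mem _ hj, t - j * δ,
      ⟨hmem, ?_⟩, by ring⟩)
    show M < |t - j * δ|
    linarith
  have hGm : MeasurableSet G :=
    (hAm.inter measurableSet_Icc).inter
      (measurableSet_lt measurable_const continuous_abs.measurable)
  have hGM : G ∩ Icc (-M) M = ∅ :=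
    eq_empty_iff_forall_notMem.2 fun z ⟨hzG, hzM⟩ => (not_le.2 hzG.2) (abs_le.2 hzM)
  calc μ (Icc (-r) r)
      ≤ μ (Icc (-(M + (ℓ + δ))) (M + (ℓ + δ))) + μ (⋃ τ ∈ S, (fun t => t + τ) '' G) :=
        (measure_mono hcover).trans (measure_union_le _ _)
    _ ≤ μ (Icc (-(M + (ℓ + δ))) (M + (ℓ + δ))) + ∑ τ ∈ S, ENNReal.ofReal β * μ G := by
        gcongr
        exact (measure_biUnion_finset_le _ _).trans
          (Finset.sum_le_sum fun τ hτ => hM τ hτ G hGm hGM)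
    _ ≤ μ (Icc (-(M + (ℓ + δ))) (M + (ℓ + δ))) +
          ENNReal.ofReal (S.card * β) * μ (A ∩ Icc (-r) r) := by
        rw [Finset.sum_const, nsmul_eq_mul, ENNReal.ofReal_mul (by positivity),
          ENNReal.ofReal_natCast, mul_assoc]
        gcongr
        exact inter_subset_left

theorem tendsto_measure_Icc_neg_atTop (μ : Measure ℝ) :
    Tendsto (fun r => μ (Icc (-r) r)) atTop (𝓝 (μ univ)) := by
  have hmono : Monotone fun r : ℝ => Icc (-r) r := fun _ _ h => Icc_subset_Icc (neg_le_neg h) h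
  have hunion : ⋃ r : ℝ, Icc (-r) r = univ :=
    eq_univ_of_forall fun x => mem_iUnion.2 ⟨|x|, abs_le.1 le_rfl⟩
  have h := tendsto_measure_iUnion_atTop (μ := μ) hmono
  rwa [hunion] at h

theorem MuErgodic.add {f g : ℝ → ℝ} (hf : MuErgodic μ f) (hg : MuErgodic μ g)
    (hfi : LocallyIntegrable f μ) (hgi : LocallyIntegrable g μ) :
    MuErgodic μ fun t => f t + g t := by
  have h := Tendsto.add hf hg
  rw [add_zero] at h
  refine h.congr fun r => ?_
  rw [integral_add (hfi.integrableOn_isCompact isCompact_Icc)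
    (hgi.integrableOn_isCompact isCompact_Icc), mul_add]

theorem not_muErgodic_of_relDense [IsFiniteMeasureOnCompacts μ] (hμ : μ univ = ⊤)
    (hH : CondH μ) {φ : ℝ → ℝ} (hφc : Continuous φ) (hφ0 : 0 ≤ φ) {c δ : ℝ} (hc : 0 < c)
    (hδ : 0 < δ) (hD : RelDense {d | ∀ s ∈ Icc d (d + δ), c ≤ φ s}) : ¬ MuErgodic μ φ := by
  intro herg
  set A := {s | c ≤ φ s}
  have hAm : MeasurableSet A := measurableSet_le measurable_const hφc.measurable
  have hAfin : ∀ r, μ (A ∩ Icc (-r) r) ≠ ⊤ := fun r =>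
    ((measure_mono inter_subset_right).trans_lt measure_Icc_lt_top).ne
  obtain ⟨ℓ, -, hℓ⟩ := hD
  obtain ⟨B, hB, R, hR⟩ := hH.exists_measure_Icc_le hAm hδ
    fun a => let ⟨d, hd, hda⟩ := hℓ a; ⟨d, hda, hd⟩
  have hmass : ∀ r, ℓ + δ ≤ r →
      μ.real (Icc (-r) r) ≤ μ.real (Icc (-R) R) + B * μ.real (A ∩ Icc (-r) r) := by
    intro r hr
    have hfin : ENNReal.ofReal B * μ (A ∩ Icc (-r) r) ≠ ⊤ :=
      ENNReal.mul_ne_top ENNReal.ofReal_ne_top (hAfin r)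
    simpa only [measureReal_def, ENNReal.toReal_add measure_Icc_lt_top.ne hfin,
      ENNReal.toReal_mul, ENNReal.toReal_ofReal hB.le] using
      ENNReal.toReal_mono (ENNReal.add_ne_top.2 ⟨measure_Icc_lt_top.ne, hfin⟩) (hR r hr)
  have hint : ∀ r, c * μ.real (A ∩ Icc (-r) r) ≤ ∫ t in Icc (-r) r, φ t ∂μ := fun r =>
    (setIntegral_ge_of_const_le_real (hAm.inter measurableSet_Icc) (hAfin r) (fun s hs => hs.1)
      (hφc.integrableOn_Icc.mono_set inter_subset_right)).trans
    (setIntegral_mono_set hφc.integrableOn_Icc (Eventually.of_forall hφ0)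
      inter_subset_right.eventuallyLE)
  have hlarge : ∀ᶠ r in atTop, 2 * μ.real (Icc (-R) R) < μ.real (Icc (-r) r) := by
    filter_upwards [(tendsto_measure_Icc_neg_atTop μ).eventually_const_lt
      (hμ ▸ ENNReal.ofReal_lt_top)] with r hr
    exact (ENNReal.ofReal_lt_iff_lt_toReal (by positivity) measure_Icc_lt_top.ne).1 hr
  have hsmall := herg.eventually (gt_mem_nhds (show 0 < c / (2 * B) by positivity))
  obtain ⟨r, ⟨hr₁, hr₂⟩, hr₃⟩ := ((hlarge.and hsmall).and (eventually_ge_atTop (ℓ + δ))).exists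
  set m := μ.real (Icc (-r) r)
  have hm : 0 < m := lt_of_le_of_lt (by positivity) hr₁
  rw [← measureReal_def, one_div_mul_eq_div, div_lt_iff₀ hm] at hr₂
  have hmA : m < 2 * B * μ.real (A ∩ Icc (-r) r) := by linarith [hmass r hr₃]
  have : c * m < c * m := calc
    c * m < c * (2 * B * μ.real (A ∩ Icc (-r) r)) := by gcongr
    _ = 2 * B * (c * μ.real (A ∩ Icc (-r) r)) := by ring
    _ ≤ 2 * B * ∫ t in Icc (-r) r, φ t ∂μ := by gcongr; exact hint r
    _ < 2 * B * (c / (2 * B) * m) := by gcongr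
    _ = c * m := by field_simp
  exact lt_irrefl _ this

end ErgodicMeasure

theorem isFiniteMeasureOnCompacts_of_measure_Icc_lt_top {μ : Measure ℝ}
    (hμ : ∀ a b : ℝ, μ (Icc a b) < ⊤) : IsFiniteMeasureOnCompacts μ :=
  ⟨fun _ hK => (measure_mono hK.isBounded.subset_Icc_sInf_sSup).trans_lt (hμ _ _)⟩

theorem stmt14_general {X : Type*} [NormedAddCommGroup X]
    (μ : Measure ℝ) (hμ1 : μ Set.univ = ⊤)
    (hμ2 : ∀ a b : ℝ, μ (Set.Icc a b) < ⊤) (hμH : CondH μ)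
    (L : ℝ) (F F₁ : ℝ → X → X)
    (hF₁c : ∀ x, Continuous fun t => F₁ t x)
    (hF₁ap : ∀ (x : X), ∀ ε > (0:ℝ), RelDense {τ : ℝ | ∃ c, c < ε ∧ ∀ t : ℝ,
      ‖F₁ (t + τ) x - F₁ t x‖ ≤ c})
    (hFc : ∀ x, Continuous fun t => F t x)
    (herg : ∀ x : X, MuErgodic μ (fun t => ‖F t x - F₁ t x‖))
    (hlip : ∀ (t : ℝ) (x y : X), ‖F t x - F t y‖ ≤ L * ‖x - y‖) :
    ∀ (t : ℝ) (x y : X), ‖F₁ t x - F₁ t y‖ ≤ L * ‖x - y‖ := by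
  have := isFiniteMeasureOnCompacts_of_measure_Icc_lt_top hμ2
  intro t₀ x y
  by_contra! hgt
  set K := ‖F₁ t₀ x - F₁ t₀ y‖ - L * ‖x - y‖ with hK_def
  have hK : 0 < K := sub_pos.2 hgt
  have hap : ∀ z, IsAlmostPeriodic fun t => F₁ t z := fun z ε hε =>
    (hF₁ap z ε hε).mono fun _ ⟨_, hc, h⟩ t => (h t).trans hc.le
  obtain ⟨δ, hδ, hD⟩ := ((hap x).sub (hap y) (hF₁c x) (hF₁c y)).relDense_Icc_norm_sub_le
    ((hF₁c x).sub (hF₁c y)) t₀ (half_pos hK)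
  have hφc : ∀ z, Continuous fun t => ‖F t z - F₁ t z‖ := fun z => ((hFc z).sub (hF₁c z)).norm
  refine not_muErgodic_of_relDense hμ1 hμH ((hφc x).add (hφc y))
    (fun _ => add_nonneg (norm_nonneg _) (norm_nonneg _)) (half_pos hK) hδ
    (hD.mono fun d hd s hs => ?_)
    ((herg x).add (herg y) (hφc x).locallyIntegrable (hφc y).locallyIntegrable)
  show K / 2 ≤ ‖F s x - F₁ s x‖ + ‖F s y - F₁ s y‖
  have hclose : ‖(F₁ s x - F₁ s y) - (F₁ t₀ x - F₁ t₀ y)‖ ≤ K / 2 := hd s hs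
  have hF := dist_triangle4 (F₁ s x) (F s x) (F s y) (F₁ s y)
  rw [dist_comm (F₁ s x) (F s x)] at hF
  simp only [dist_eq_norm] at hF
  linarith [norm_sub_norm_le (F₁ t₀ x - F₁ t₀ y) (F₁ s x - F₁ s y),
    norm_sub_rev (F₁ t₀ x - F₁ t₀ y) (F₁ s x - F₁ s y), hlip s x y, hK_def]

/-- if, for every `x`, `F₁(·,x)` is Bohr almost periodic, `F(·,x)` is bounded
and continuous, and `t ↦ ‖F(t,x) - F₁(t,x)‖` is `μ`-ergodic (with `μ` satisfying (H)), and
`F` is `L`-Lipschitz in the second variable, then `F₁` is also `L`-Lipschitz in the second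
variable. -/
theorem stmt14 {X : Type*} [NormedAddCommGroup X] [NormedSpace ℝ X] [CompleteSpace X]
    (μ : Measure ℝ) (hμ1 : μ Set.univ = ⊤)
    (hμ2 : ∀ a b : ℝ, μ (Set.Icc a b) < ⊤) (hμH : CondH μ)
    (L : ℝ) (hL : 0 ≤ L) (F F₁ : ℝ → X → X)
    (hF₁c : ∀ x, Continuous fun t => F₁ t x)
    (hF₁ap : ∀ (x : X), ∀ ε > (0:ℝ), RelDense {τ : ℝ | ∃ c, c < ε ∧ ∀ t : ℝ,
      ‖F₁ (t + τ) x - F₁ t x‖ ≤ c})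
    (hFc : ∀ x, Continuous fun t => F t x)
    (hFb : ∀ x : X, ∃ C : ℝ, ∀ t : ℝ, ‖F t x‖ ≤ C)
    (herg : ∀ x : X, MuErgodic μ (fun t => ‖F t x - F₁ t x‖))
    (hlip : ∀ (t : ℝ) (x y : X), ‖F t x - F t y‖ ≤ L * ‖x - y‖) :
    ∀ (t : ℝ) (x y : X), ‖F₁ t x - F₁ t y‖ ≤ L * ‖x - y‖ :=
  stmt14_general μ hμ1 hμ2 hμH L F F₁ hF₁c hF₁ap hFc herg hlip
end

section
/- Let g(t) = 2 + cos t + cos(√2·t) and H(t) = sin(1/g(t)). Then: (i) g(t) > 0 for every t ∈ ℝ, so H is differentiable on ℝ with derivative h := H'; (ii) for every t ∈ ℝ, the limit x(t) := lim_{a→-∞} ∫_a^t e^{s-t} h(s) ds exists and equals H(t) - ∫_{-∞}^t e^{s-t} H(s) ds; (iii) x is differentiable and satisfies x'(t) = -x(t) + h(t) for every t ∈ ℝ; (iv) |x(t)| ≤ 2 for every t ∈ ℝ; (v) x is the unique bounded solution: if y : ℝ → ℝ is bounded and differentiable with y'(t) = -y(t) + h(t) for all t, then y = x. -/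
open MeasureTheory Filter Topology

/-- `g(t) = 2 + cos t + cos(√2 t)`. -/
noncomputable def gfun (t : ℝ) : ℝ := 2 + Real.cos t + Real.cos (Real.sqrt 2 * t)

/-- The Levitan function `H(t) = sin(1/g(t))`. -/
noncomputable def Hfun (t : ℝ) : ℝ := Real.sin (1 / gfun t)

/-- `x(t) = H(t) - ∫_{-∞}^t e^{s-t} H(s) ds`. -/
noncomputable def xfun (t : ℝ) : ℝ := Hfun t - ∫ s in Set.Iic t, Real.exp (s - t) * Hfun s

/-!
`g` cannot vanish: `cos t = cos (√2 t) = -1` would make both `t` and `√2 t` odd multiples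
of `π`, so `√2` would be rational. Hence `H` is smooth and bounded by `1`.

With `E f (t) = ∫_{-∞}^t e^{s-t} f(s) ds` (`expConv f t`), integration by parts gives
`∫_a^t e^{s-t} h(s) ds = H(t) - e^{a-t} H(a) - ∫_a^t e^{s-t} H(s) ds → H(t) - E H (t) = x(t)`,
and `(E f)' = f - E f` gives `x' = h - (H - E H) = -x + h`. The difference of two bounded
solutions solves `w' = -w`, so `eᵗ w(t)` is constant; boundedness of `w` as `t → -∞` forces
that constant to be `0`.
-/

open Real Set

theorem two_add_cos_add_cos_mul_pos {α : ℝ} (hα : Irrational α) (t : ℝ) :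
    0 < 2 + cos t + cos (α * t) := by
  by_contra! hle
  have h1 := neg_one_le_cos t
  have h2 := neg_one_le_cos (α * t)
  obtain ⟨k, hk⟩ := cos_eq_neg_one_iff.mp (show cos t = -1 by linarith)
  obtain ⟨m, hm⟩ := cos_eq_neg_one_iff.mp (show cos (α * t) = -1 by linarith)
  have hk0 : ((2 * k + 1 : ℤ) : ℝ) ≠ 0 := by exact_mod_cast (by omega : 2 * k + 1 ≠ 0)
  apply hα.ne_rational (2 * m + 1) (2 * k + 1)
  rw [eq_div_iff hk0]
  refine mul_right_cancel₀ pi_ne_zero ?_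
  push_cast
  linear_combination α * hk - hm

theorem gfun_pos (t : ℝ) : 0 < gfun t :=
  two_add_cos_add_cos_mul_pos irrational_sqrt_two t

theorem contDiff_Hfun : ContDiff ℝ 1 Hfun := by
  have hg : ContDiff ℝ 1 gfun := by unfold gfun; fun_prop
  exact contDiff_sin.comp (contDiff_const.div hg fun t => (gfun_pos t).ne')

theorem abs_Hfun_le_one (t : ℝ) : |Hfun t| ≤ 1 := abs_sin_le_one _

noncomputable def expConv (f : ℝ → ℝ) (t : ℝ) : ℝ := ∫ s in Iic t, exp (s - t) * f s

theorem xfun_eq_sub_expConv (t : ℝ) : xfun t = Hfun t - expConv Hfun t := rfl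

theorem integrableOn_exp_sub_Iic (t a : ℝ) : IntegrableOn (fun s => exp (s - t)) (Iic a) := by
  simp_rw [exp_sub]
  exact (integrableOn_exp_Iic a).div_const _

theorem integral_exp_sub_Iic (t a : ℝ) : ∫ s in Iic a, exp (s - t) = exp (a - t) := by
  simp_rw [exp_sub]
  rw [integral_div, integral_exp_Iic]

section ExpConv

variable {f : ℝ → ℝ} {M : ℝ}

theorem norm_exp_sub_mul_le (hM : ∀ s, |f s| ≤ M) (t s : ℝ) :
    ‖exp (s - t) * f s‖ ≤ M * exp (s - t) := by
  rw [norm_mul, norm_of_nonneg (exp_pos _).le, mul_comm]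
  exact mul_le_mul_of_nonneg_right (hM s) (exp_pos _).le

theorem integrableOn_exp_sub_mul_Iic (hf : AEStronglyMeasurable f) (hM : ∀ s, |f s| ≤ M)
    (t a : ℝ) : IntegrableOn (fun s => exp (s - t) * f s) (Iic a) :=
  (integrableOn_exp_sub_Iic t a).mul_bdd hf.restrict (.of_forall hM)

theorem abs_expConv_le (hM : ∀ s, |f s| ≤ M) (t : ℝ) : |expConv f t| ≤ M := by
  have h := norm_integral_le_of_norm_le ((integrableOn_exp_sub_Iic t t).const_mul M)
    (.of_forall (norm_exp_sub_mul_le hM t))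
  rwa [integral_const_mul, integral_exp_sub_Iic, sub_self, exp_zero, mul_one] at h

theorem expConv_eq_exp_neg_mul (f : ℝ → ℝ) (t : ℝ) :
    expConv f t = exp (-t) * ∫ s in Iic t, exp s * f s := by
  simp_rw [expConv, sub_eq_neg_add, exp_add, mul_assoc, integral_const_mul]

theorem hasDerivAt_integral_Iic {φ : ℝ → ℝ} (hφ : Continuous φ)
    (hint : ∀ a, IntegrableOn φ (Iic a)) (t : ℝ) :
    HasDerivAt (fun u => ∫ s in Iic u, φ s) (φ t) t := by
  have hsplit : (fun u => ∫ s in Iic u, φ s) =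
      fun u => (∫ s in Iic 0, φ s) + ∫ s in 0..u, φ s := by
    funext u
    rw [← intervalIntegral.integral_Iic_sub_Iic (hint 0) (hint u), add_sub_cancel]
  rw [hsplit]
  exact (intervalIntegral.integral_hasDerivAt_right (hφ.intervalIntegrable 0 t)
    (hφ.stronglyMeasurableAtFilter _ _) hφ.continuousAt).const_add _

theorem hasDerivAt_expConv (hf : Continuous f) (hM : ∀ s, |f s| ≤ M) (t : ℝ) :
    HasDerivAt (expConv f) (f t - expConv f t) t := by
  have hint (a : ℝ) : IntegrableOn (fun s => exp s * f s) (Iic a) := by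
    simpa using integrableOn_exp_sub_mul_Iic hf.aestronglyMeasurable hM 0 a
  have hG := hasDerivAt_integral_Iic (φ := fun s => exp s * f s) (by fun_prop) hint t
  rw [funext (expConv_eq_exp_neg_mul f)]
  refine ((hasDerivAt_neg t).exp.mul hG).congr_deriv ?_
  have hinv : exp (-t) * exp t = 1 := by rw [← exp_add, neg_add_cancel, exp_zero]
  beta_reduce
  linear_combination f t * hinv

theorem tendsto_intervalIntegral_exp_sub_mul_deriv (hf : ContDiff ℝ 1 f)
    (hM : ∀ s, |f s| ≤ M) (t : ℝ) :
    Tendsto (fun a => ∫ s in a..t, exp (s - t) * deriv f s) atBot (𝓝 (f t - expConv f t)) := by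
  have hexp (s : ℝ) : HasDerivAt (fun s => exp (s - t)) (exp (s - t)) s := by
    simpa using ((hasDerivAt_id s).sub_const t).exp
  have ibp (a : ℝ) : ∫ s in a..t, exp (s - t) * deriv f s
      = f t - (exp (a - t) * f a + ∫ s in a..t, exp (s - t) * f s) := by
    rw [intervalIntegral.integral_mul_deriv_eq_deriv_mul (fun s _ => hexp s)
      (fun s _ => (hf.differentiable one_ne_zero s).hasDerivAt)
      ((continuous_exp.comp (continuous_sub_right t)).intervalIntegrable a t)
      ((hf.continuous_deriv le_rfl).intervalIntegrable a t), sub_self, exp_zero, one_mul]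
    ring
  have hboundary : Tendsto (fun a => exp (a - t) * f a) atBot (𝓝 0) := by
    refine squeeze_zero_norm (norm_exp_sub_mul_le hM t) ?_
    have hshift := tendsto_atBot_add_const_right atBot (-t) tendsto_id
    simpa [sub_eq_add_neg] using (tendsto_exp_atBot.comp hshift).const_mul M
  have htail := intervalIntegral_tendsto_integral_Iic t
    (integrableOn_exp_sub_mul_Iic hf.continuous.aestronglyMeasurable hM t t) tendsto_id
  have hlim := (tendsto_const_nhds (x := f t)).sub (hboundary.add htail)
  rw [zero_add] at hlim
  exact hlim.congr fun a => (ibp a).symm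

end ExpConv

theorem eq_zero_of_hasDerivAt_neg_of_bounded {w : ℝ → ℝ} (hw : ∀ t, HasDerivAt w (-w t) t)
    (hb : ∃ C, ∀ t, |w t| ≤ C) : w = 0 := by
  obtain ⟨C, hC⟩ := hb
  have hderiv (t : ℝ) : HasDerivAt (fun s => exp s * w s) 0 t := by
    exact ((hasDerivAt_exp t).mul (hw t)).congr_deriv (by ring)
  funext t
  have hbound (s : ℝ) : |exp t * w t| ≤ C * exp s := by
    rw [← is_const_of_deriv_eq_zero (fun u => (hderiv u).differentiableAt)
      (fun u => (hderiv u).deriv) s t, abs_mul, abs_of_pos (exp_pos s), mul_comm]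
    exact mul_le_mul_of_nonneg_right (hC s) (exp_pos s).le
  have hlim : Tendsto (fun s => C * exp s) atBot (𝓝 0) := by
    simpa using tendsto_exp_atBot.const_mul C
  simpa [exp_ne_zero] using abs_nonpos_iff.mp (ge_of_tendsto' hlim hbound)

theorem eq_of_hasDerivAt_neg_add_of_bounded {x y h : ℝ → ℝ}
    (hx : ∀ t, HasDerivAt x (-x t + h t) t) (hy : ∀ t, HasDerivAt y (-y t + h t) t)
    (hxb : ∃ C, ∀ t, |x t| ≤ C) (hyb : ∃ C, ∀ t, |y t| ≤ C) : y = x := by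
  obtain ⟨Cx, hCx⟩ := hxb
  obtain ⟨Cy, hCy⟩ := hyb
  have hdiff := eq_zero_of_hasDerivAt_neg_of_bounded (w := y - x)
    (fun t => ((hy t).sub (hx t)).congr_deriv (by simp only [Pi.sub_apply]; ring))
    ⟨Cy + Cx, fun t => (abs_sub _ _).trans (add_le_add (hCy t) (hCx t))⟩
  exact sub_eq_zero.mp hdiff

/-- (i) `g > 0` everywhere, so `H` is differentiable with derivative
`h = H'`; (ii) for every `t`, `lim_{a→-∞} ∫_a^t e^{s-t} h(s) ds` exists and equals
`x(t) = H(t) - ∫_{-∞}^t e^{s-t} H(s) ds`; (iii) `x' = -x + h`; (iv) `|x| ≤ 2`;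
(v) `x` is the unique bounded solution of `y' = -y + h`. -/
theorem stmt15 :
    (∀ t : ℝ, 0 < gfun t) ∧
    (∀ t : ℝ, DifferentiableAt ℝ Hfun t) ∧
    (∀ t : ℝ, Tendsto (fun a : ℝ => ∫ s in a..t, Real.exp (s - t) * deriv Hfun s)
      atBot (𝓝 (xfun t))) ∧
    (∀ t : ℝ, HasDerivAt xfun (-(xfun t) + deriv Hfun t) t) ∧
    (∀ t : ℝ, |xfun t| ≤ 2) ∧
    (∀ y : ℝ → ℝ, (∃ C : ℝ, ∀ t : ℝ, |y t| ≤ C) →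
      (∀ t : ℝ, HasDerivAt y (-(y t) + deriv Hfun t) t) → y = xfun) := by
  have hx' (t : ℝ) : HasDerivAt xfun (-(xfun t) + deriv Hfun t) t :=
    ((contDiff_Hfun.differentiable one_ne_zero t).hasDerivAt.sub
      (hasDerivAt_expConv contDiff_Hfun.continuous abs_Hfun_le_one t)).congr_deriv
      (by rw [xfun_eq_sub_expConv]; ring)
  have hxb (t : ℝ) : |xfun t| ≤ 2 := calc
    |xfun t| ≤ |Hfun t| + |expConv Hfun t| := abs_sub _ _
    _ ≤ 1 + 1 := add_le_add (abs_Hfun_le_one t) (abs_expConv_le abs_Hfun_le_one t)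
    _ = 2 := by norm_num
  exact ⟨gfun_pos, contDiff_Hfun.differentiable one_ne_zero,
    tendsto_intervalIntegral_exp_sub_mul_deriv contDiff_Hfun abs_Hfun_le_one, hx', hxb,
    fun y hyb hy => eq_of_hasDerivAt_neg_add_of_bounded hx' hy ⟨2, hxb⟩ hyb⟩
end
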